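/- arXiv:1302.1813 — 5 statements merged into one kernel-verified Lean document; each statement's English description precedes it below -/
import Mathlib

section
/- The frame polarity with respect to a triangle is involutive: for any generic point p of the projective plane (a point lying on no side of the triangle Δ), one has (p^•)^• = p, where p^• denotes the frame polar line of p and the polarity on lines is defined dually with respect to the dual triangle. -/
/-- `φ` is a representative, in the dual space, of the frame polar hyperplane of the
point `P(p)` with respect to the triangle `(P(v 0), P(v 1), P(v 2))`: there is a basis
`b` adapted to the projective frame `(P(v 0), P(v 1), P(v 2), P(p))`
(i.e. `b i = c i • v i` and `b 0 + b 1 + b 2 = d • p` with nonzero scalars), and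
`φ` is the sum of the dual basis vectors. -/
def IsFramePolar {K V : Type*} [Field K] [AddCommGroup V] [Module K V]
    (v : Fin 3 → V) (p : V) (φ : Module.Dual K V) : Prop :=
  ∃ (b : Module.Basis (Fin 3) K V) (c : Fin 3 → K) (d : K), (∀ i, c i ≠ 0) ∧ d ≠ 0 ∧
    (∀ i, b i = c i • v i) ∧ (b 0 + b 1 + b 2 = d • p) ∧
    φ = b.dualBasis 0 + b.dualBasis 1 + b.dualBasis 2

/-!
Write `φ = ∑ bᵢ*` and `Ψ = ∑ b'ᵢ*` for the adapted bases `bᵢ = cᵢ vᵢ` (with `∑ bᵢ = d p`) and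
`b'ᵢ = c'ᵢ wᵢ` (with `∑ b'ᵢ = d' φ`). Since `wᵢ` kills `vⱼ` for `i ≠ j`, the forms `b'ᵢ` are
diagonal with respect to `b`, so evaluating `∑ b'ᵢ = d' φ` at `bⱼ` and `b'ⱼ` at `d p = ∑ bᵢ`
both isolate `b'ⱼ(bⱼ)`: hence `d · b'ⱼ(p) = d'` for every `j`. The form `(d / d') · eval p` on
`V*` therefore takes the value `1` on every `b'ⱼ`, which characterises `Ψ`.
-/

open Module

namespace Module.Basis

variable {ι R M : Type*} [Fintype ι] [CommSemiring R] [AddCommMonoid M] [Module R M]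

theorem sum_dualBasis_apply_self [DecidableEq ι] (b : Basis ι R M) (j : ι) :
    (∑ i, b.dualBasis i) (b j) = 1 := by
  simp [LinearMap.sum_apply]

theorem eq_sum_dualBasis_iff [DecidableEq ι] (b : Basis ι R M) {f : Dual R M} :
    f = ∑ i, b.dualBasis i ↔ ∀ j, f (b j) = 1 := by
  refine ⟨fun h j => h ▸ b.sum_dualBasis_apply_self j, fun h => b.ext fun j => ?_⟩
  rw [h j, b.sum_dualBasis_apply_self j]

section Diagonal

variable (b : Basis ι R M) {u : ι → Dual R M} (hu : ∀ i j, i ≠ j → u i (b j) = 0)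
include hu

theorem apply_sum_of_diagonal (j : ι) : u j (∑ i, b i) = u j (b j) := by
  rw [map_sum, Finset.sum_eq_single j (fun i _ hij => hu j i hij.symm) (by simp)]

theorem sum_apply_of_diagonal (j : ι) : (∑ i, u i) (b j) = u j (b j) := by
  rw [LinearMap.sum_apply, Finset.sum_eq_single j (fun i _ hij => hu i j hij) (by simp)]

end Diagonal

end Module.Basis

theorem IsFramePolar.exists_basis {K V : Type*} [Field K] [AddCommGroup V] [Module K V]
    {v : Fin 3 → V} {p : V} {φ : Dual K V} (h : IsFramePolar v p φ) :
    ∃ (b : Basis (Fin 3) K V) (c : Fin 3 → K) (d : K), d ≠ 0 ∧ (∀ i, b i = c i • v i) ∧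
      ∑ i, b i = d • p ∧ φ = ∑ i, b.dualBasis i := by
  obtain ⟨b, c, d, -, hd, hbc, hsum, hφ⟩ := h
  exact ⟨b, c, d, hd, hbc, by rw [Fin.sum_univ_three, hsum], by rw [Fin.sum_univ_three, hφ]⟩

theorem stmt2_general (K V : Type*) [Field K] [AddCommGroup V] [Module K V]
    (v : Fin 3 → V)
    (p : V)
    (w : Fin 3 → Module.Dual K V)
    (hw : ∀ i j : Fin 3, i ≠ j → w i (v j) = 0)
    (φ : Module.Dual K V) (hφ : IsFramePolar v p φ)
    (Ψ : Module.Dual K (Module.Dual K V)) (hΨ : IsFramePolar w φ Ψ) :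
    ∃ t : K, t ≠ 0 ∧ Ψ = t • Module.Dual.eval K V p := by
  obtain ⟨b, c, d, hd, hbc, hsum, rfl⟩ := hφ.exists_basis
  obtain ⟨b', c', d', hd', hbc', hsum', rfl⟩ := hΨ.exists_basis
  have hdiag : ∀ i j, i ≠ j → b' i (b j) = 0 := fun i j hij => by
    rw [hbc', hbc, LinearMap.smul_apply, map_smul, hw i j hij, smul_zero, smul_zero]
  have hconst : ∀ j, d * b' j p = d' := fun j =>
    calc d * b' j p = b' j (∑ i, b i) := by rw [hsum, map_smul, smul_eq_mul]
      _ = (∑ i, b' i) (b j) := by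
        rw [b.apply_sum_of_diagonal hdiag, b.sum_apply_of_diagonal hdiag]
      _ = d' := by rw [hsum', LinearMap.smul_apply, b.sum_dualBasis_apply_self, smul_eq_mul,
        mul_one]
  refine ⟨d / d', div_ne_zero hd hd', ((b'.eq_sum_dualBasis_iff).mpr fun j => ?_).symm⟩
  rw [LinearMap.smul_apply, Dual.eval_apply, smul_eq_mul, div_mul_eq_mul_div, hconst j,
    div_self hd']

/-- the frame polarity with respect to a triangle is involutive.
Let `v 0, v 1, v 2` be representatives of the vertices of a triangle in a projective
plane `P(V)` (`dim V = 3`), and `p` a representative of a generic point (on no side).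
Let `φ` represent the frame polar line `p^•`.  The dual triangle has vertices
`D₁*, D₂*, D₃*`, represented by forms `w i` vanishing on the two vertices `v j`, `j ≠ i`;
let `Ψ` represent the frame polar, in `P(V*)`, of the point `φ` with respect to this
dual triangle.  Then `Ψ` corresponds, under the canonical identification `V ≃ V**`,
to the original point: `Ψ = t • eval p` for some nonzero scalar `t`. -/
theorem stmt2 (K V : Type*) [Field K] [AddCommGroup V] [Module K V]
    [FiniteDimensional K V] (hdim : Module.finrank K V = 3)
    (v : Fin 3 → V) (hv : LinearIndependent K v)
    (p : V) (hp : ∀ i j : Fin 3, i ≠ j → p ∉ Submodule.span K {v i, v j})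
    (w : Fin 3 → Module.Dual K V) (hw0 : ∀ i, w i ≠ 0)
    (hw : ∀ i j : Fin 3, i ≠ j → w i (v j) = 0)
    (φ : Module.Dual K V) (hφ : IsFramePolar v p φ)
    (Ψ : Module.Dual K (Module.Dual K V)) (hΨ : IsFramePolar w φ Ψ) :
    ∃ t : K, t ≠ 0 ∧ Ψ = t • Module.Dual.eval K V p :=
  stmt2_general K V v p w hw φ hφ Ψ hΨ
end

section
/- Let Δ = (p₁,p₂,p₃) be a triangle in a projective plane over a field of characteristic ≠ 2, and p a generic point. For each permutation (i,j,k) of (1,2,3), let uᵢ be the intersection of (pᵢp) with (pⱼpₖ), and uᵢ' the fourth harmonic of (pⱼ,pₖ,uᵢ). Then the three points u₁', u₂', u₃' are collinear. -/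
/-- `d` is a representative of the fourth harmonic of the triple of collinear points
`(P a, P b, P c)`: writing `c = α • a + β • b` with `α, β ≠ 0`, the point `d` is a
nonzero multiple of `α • a - β • b` (i.e. the cross-ratio `(P a, P b, P c, P d)` is `-1`). -/
def IsFourthHarmonic (K : Type*) {V : Type*} [Field K] [AddCommGroup V] [Module K V]
    (a b c d : V) : Prop :=
  ∃ α β : K, α ≠ 0 ∧ β ≠ 0 ∧ c = α • a + β • b ∧
    ∃ t : K, t ≠ 0 ∧ d = t • (α • a - β • b)

section Aux

variable {K V : Type*} [Field K] [AddCommGroup V] [Module K V]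

lemma indep3 {v : Fin 3 → V} (hv : LinearIndependent K v) {a b c : K}
    (h : a • v 0 + b • v 1 + c • v 2 = 0) : a = 0 ∧ b = 0 ∧ c = 0 := by
  have := Fintype.linearIndependent_iff.mp hv ![a, b, c]
    (by simpa [Fin.sum_univ_three] using h)
  exact ⟨this 0, this 1, this 2⟩

lemma key {e0 e1 e2 : V}
    (hind : ∀ a b c : K, a • e0 + b • e1 + c • e2 = 0 → a = 0 ∧ b = 0 ∧ c = 0)
    {a b c : K} {p u u' : V}
    (hpv : p = a • e0 + b • e1 + c • e2)
    (hu0 : u ≠ 0) (hu1 : u ∈ Submodule.span K {e0, p})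
    (hu2 : u ∈ Submodule.span K {e1, e2})
    (hh : IsFourthHarmonic K e1 e2 u u') :
    ∃ t : K, t ≠ 0 ∧ u' = t • (b • e1 - c • e2) := by
  obtain ⟨s, t, hst⟩ := Submodule.mem_span_pair.mp hu1
  obtain ⟨x, y, hxy⟩ := Submodule.mem_span_pair.mp hu2
  obtain ⟨α, β, hα, hβ, hcu, t', ht', hd⟩ := hh
  rw [hpv] at hst
  -- relate (x,y) and (α,β)
  have hrel : (0:K) • e0 + (x - α) • e1 + (y - β) • e2 = 0 := by
    linear_combination (norm := module) hxy + hcu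
  obtain ⟨-, hxa, hyb⟩ := hind _ _ _ hrel
  have hxα : x = α := sub_eq_zero.mp hxa
  have hyβ : y = β := sub_eq_zero.mp hyb
  -- relate (x,y) and (t*b, t*c)
  have hrel2 : (s + t * a) • e0 + (t * b - x) • e1 + (t * c - y) • e2 = 0 := by
    linear_combination (norm := module) hst - hxy
  obtain ⟨-, hxb, hyc⟩ := hind _ _ _ hrel2
  have hxtb : x = t * b := (sub_eq_zero.mp hxb).symm
  have hytc : y = t * c := (sub_eq_zero.mp hyc).symm
  have ht : t ≠ 0 := by
    rintro rfl
    apply hu0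
    rw [← hxy, hxtb, hytc]
    simp
  refine ⟨t' * t, mul_ne_zero ht' ht, ?_⟩
  rw [hd, ← hxα, ← hyβ, hxtb, hytc]
  module

end Aux

/-- let `Δ = (P(v 0), P(v 1), P(v 2))` be a triangle in a projective
plane over a field of characteristic `≠ 2`, and `P p` a generic point (on no side of
the triangle).  For each permutation `(i,j,k)` of `(0,1,2)`, let `u i` be a
representative of the intersection of the lines `(pᵢ p)` and `(pⱼ pₖ)`, and `u' i` a
representative of the fourth harmonic of `(pⱼ, pₖ, u i)`.  Then the three points
`u' 0, u' 1, u' 2` are collinear (their representatives are linearly dependent). -/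
theorem stmt4 (K V : Type*) [Field K] (h2 : (2 : K) ≠ 0)
    [AddCommGroup V] [Module K V]
    (v : Fin 3 → V) (hv : LinearIndependent K v)
    (p : V) (hp : ∀ i j : Fin 3, i ≠ j → p ∉ Submodule.span K {v i, v j})
    (u u' : Fin 3 → V)
    (h : ∀ i j k : Fin 3, ({i, j, k} : Set (Fin 3)) = Set.univ →
      u i ≠ 0 ∧ u i ∈ Submodule.span K {v i, p} ∧ u i ∈ Submodule.span K {v j, v k} ∧
      IsFourthHarmonic K (v j) (v k) (u i) (u' i)) :
    ¬ LinearIndependent K u' := by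
  obtain ⟨hu0, hu0m, hu0m', hh0⟩ := h 0 1 2 (by ext x; fin_cases x <;> simp)
  -- express p in the basis
  obtain ⟨s, t, hst⟩ := Submodule.mem_span_pair.mp hu0m
  obtain ⟨x, y, hxy⟩ := Submodule.mem_span_pair.mp hu0m'
  have ht : t ≠ 0 := by
    rintro rfl
    have h0 : s • v 0 + (-x) • v 1 + (-y) • v 2 = 0 := by
      linear_combination (norm := module) hst - hxy
    obtain ⟨hs, -, -⟩ := indep3 hv h0
    apply hu0
    rw [← hst, hs]
    simp
  set a : K := -(t⁻¹ * s) with ha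
  set b : K := t⁻¹ * x with hb
  set c : K := t⁻¹ * y with hc
  have hpv : p = a • v 0 + b • v 1 + c • v 2 := by
    have h1 : t • p = x • v 1 + y • v 2 - s • v 0 := by
      linear_combination (norm := module) hst - hxy
    have h2 : p = t⁻¹ • (t • p) := by rw [smul_smul, inv_mul_cancel₀ ht, one_smul]
    rw [h2, h1, ha, hb, hc]
    module
  have ha0 : a ≠ 0 := by
    intro h0
    exact hp 1 2 (by decide) (Submodule.mem_span_pair.mpr ⟨b, c, by
      rw [hpv, h0, zero_smul, zero_add]⟩)
  have hb0 : b ≠ 0 := by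
    intro h0
    exact hp 0 2 (by decide) (Submodule.mem_span_pair.mpr ⟨a, c, by
      rw [hpv, h0, zero_smul, add_zero]⟩)
  have hc0 : c ≠ 0 := by
    intro h0
    exact hp 0 1 (by decide) (Submodule.mem_span_pair.mpr ⟨a, b, by
      rw [hpv, h0, zero_smul, add_zero]⟩)
  -- three applications of `key`
  have hind012 : ∀ x y z : K, x • v 0 + y • v 1 + z • v 2 = 0 → x = 0 ∧ y = 0 ∧ z = 0 :=
    fun x y z hh => indep3 hv hh
  obtain ⟨t0, ht0, hu'0⟩ := key hind012 hpv hu0 hu0m hu0m' hh0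
  obtain ⟨hu1, hu1m, hu1m', hh1⟩ := h 1 2 0 (by ext x; fin_cases x <;> simp)
  have hind120 : ∀ x y z : K, x • v 1 + y • v 2 + z • v 0 = 0 → x = 0 ∧ y = 0 ∧ z = 0 := by
    intro x y z hh
    obtain ⟨h1, h2, h3⟩ := indep3 hv (a := z) (b := x) (c := y)
      (by linear_combination (norm := module) hh)
    exact ⟨h2, h3, h1⟩
  have hpv1 : p = b • v 1 + c • v 2 + a • v 0 := by rw [hpv]; abel
  obtain ⟨t1, ht1, hu'1⟩ := key hind120 hpv1 hu1 hu1m hu1m' hh1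
  obtain ⟨hu2', hu2m, hu2m', hh2⟩ := h 2 0 1 (by ext x; fin_cases x <;> simp)
  have hind201 : ∀ x y z : K, x • v 2 + y • v 0 + z • v 1 = 0 → x = 0 ∧ y = 0 ∧ z = 0 := by
    intro x y z hh
    obtain ⟨h1, h2, h3⟩ := indep3 hv (a := y) (b := z) (c := x)
      (by linear_combination (norm := module) hh)
    exact ⟨h3, h1, h2⟩
  have hpv2 : p = c • v 2 + a • v 0 + b • v 1 := by rw [hpv]; abel
  obtain ⟨t2, ht2, hu'2⟩ := key hind201 hpv2 hu2' hu2m hu2m' hh2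
  -- conclude
  intro hcontra
  have hzero := Fintype.linearIndependent_iff.mp hcontra ![t0⁻¹, t1⁻¹, t2⁻¹] ?_ 0
  · exact inv_ne_zero ht0 (by simpa using hzero)
  · rw [Fin.sum_univ_three]
    simp only [Matrix.cons_val_zero, Matrix.cons_val_one, Matrix.head_cons,
      Matrix.cons_val_two, Matrix.tail_cons]
    rw [hu'0, hu'1, hu'2, smul_smul, smul_smul, smul_smul,
      inv_mul_cancel₀ ht0, inv_mul_cancel₀ ht1, inv_mul_cancel₀ ht2,
      one_smul, one_smul, one_smul]
    abel
end

section
/- With notations as above, the line through the three harmonic points u₁', u₂', u₃' (the harmonic polar p^# of p with respect to Δ) coincides with the frame polar p^•: in the homogeneous coordinates defined by the frame (p₁,p₂,p₃,p), both are the line of equation x₁+x₂+x₃ = 0. -/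
open Module

lemma Module.Basis.dualBasis_eq_smul_proj {K ι : Type*} [Field K] [Fintype ι]
    [DecidableEq ι] (b : Basis ι K (ι → K)) {d : K} (hd : d ≠ 0)
    (hb : ∀ i, b i = Pi.single i d) (i : ι) :
    b.dualBasis i = d⁻¹ • LinearMap.proj i :=
  b.ext fun j => by
    rw [Basis.dualBasis_apply_self, hb j]
    by_cases hji : j = i
    · subst hji; simp [hd]
    · simp [hji, Ne.symm hji]

lemma isFramePolar_single_one {K : Type*} [Field K] {φ : Dual K (Fin 3 → K)}
    (h : IsFramePolar (fun i => Pi.single i 1) (fun _ => 1) φ) :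
    ∃ t : K, t ≠ 0 ∧ ∀ x, φ x = t * (x 0 + x 1 + x 2) := by
  obtain ⟨b, c, d, -, hd, hb, hsum, rfl⟩ := h
  have hcd (i : Fin 3) : c i = d := by
    have hi := congrFun hsum i
    fin_cases i <;> simpa [hb] using hi
  have hdual := b.dualBasis_eq_smul_proj hd fun i => by
    ext m
    simp [hb i, hcd i, Pi.single_apply]
  exact ⟨d⁻¹, inv_ne_zero hd, fun x => by
    simp only [LinearMap.add_apply, hdual, LinearMap.smul_apply, LinearMap.proj_apply,
      smul_eq_mul]
    ring⟩

lemma IsFourthHarmonic.exists_eq_smul_sub {K V : Type*} [Field K] [AddCommGroup V] [Module K V]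
    {a b d : V} (hab : LinearIndependent K ![a, b]) (h : IsFourthHarmonic K a b (a + b) d) :
    ∃ t : K, t ≠ 0 ∧ d = t • (a - b) := by
  obtain ⟨α, β, -, -, hc, t, ht, rfl⟩ := h
  obtain ⟨rfl, rfl⟩ := hab.eq_of_pair (s := 1) (t := 1) (by simpa using hc)
  exact ⟨t, ht, by simp⟩

lemma linearIndependent_pair_single_one {K ι : Type*} [Field K] [DecidableEq ι] {j k : ι}
    (hjk : j ≠ k) : LinearIndependent K ![(Pi.single j 1 : ι → K), Pi.single k 1] := by
  have := (Pi.linearIndependent_single_one ι K).comp ![j, k]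
    (by simpa [Function.Injective, Fin.forall_fin_two] using ⟨hjk, Ne.symm hjk⟩)
  convert this using 1
  ext m
  fin_cases m <;> rfl

lemma Fin.ne_of_insert_pair_eq_univ {i j k : Fin 3}
    (h : ({i, j, k} : Set (Fin 3)) = Set.univ) : j ≠ k := by
  rintro rfl
  simp only [Set.eq_univ_iff_forall, Set.mem_insert_iff, Set.mem_singleton_iff, or_self] at h
  revert i j h
  decide

theorem stmt5_general (K : Type*) [Field K]
    (e : Fin 3 → Fin 3 → K) (he : ∀ m, e m = (Pi.single m 1 : Fin 3 → K))
    (p : Fin 3 → K) (hpp : p = fun _ => 1) :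
    (∀ φ : Module.Dual K (Fin 3 → K), IsFramePolar e p φ →
      ∃ t : K, t ≠ 0 ∧ ∀ x, φ x = t * (x 0 + x 1 + x 2)) ∧
    (∀ i j k : Fin 3, ({i, j, k} : Set (Fin 3)) = Set.univ →
      ∀ u' : Fin 3 → K, IsFourthHarmonic K (e j) (e k) (e j + e k) u' →
        u' 0 + u' 1 + u' 2 = 0) := by
  obtain rfl : e = fun m => Pi.single m 1 := funext he
  subst hpp
  refine ⟨fun φ => isFramePolar_single_one, fun i j k hijk u' hu' => ?_⟩
  have hjk := Fin.ne_of_insert_pair_eq_univ hijk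
  obtain ⟨t, -, rfl⟩ := hu'.exists_eq_smul_sub (linearIndependent_pair_single_one (K := K) hjk)
  rw [← Fin.sum_univ_three]
  simp [Finset.sum_sub_distrib, ← Finset.mul_sum]

/-- in the homogeneous coordinates defined by the frame
`(p₁, p₂, p₃, p) = ([1:0:0], [0:1:0], [0:0:1], [1:1:1])`, the harmonic polar `p^#`
(the line through the fourth harmonics `uᵢ'` of `(pⱼ, pₖ, uᵢ)`, where
`uᵢ = (pᵢp) ∩ (pⱼpₖ)`) coincides with the frame polar `p^•`: both are the line of
equation `x₁ + x₂ + x₃ = 0`.  Concretely: every representative `φ` of the frame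
polar is a nonzero multiple of the form `x ↦ x₁+x₂+x₃`, and every representative of
each fourth harmonic `uᵢ'` satisfies `x₁+x₂+x₃ = 0`. -/
theorem stmt5 (K : Type*) [Field K] (h2 : (2 : K) ≠ 0)
    (e : Fin 3 → Fin 3 → K) (he : ∀ m, e m = (Pi.single m 1 : Fin 3 → K))
    (p : Fin 3 → K) (hpp : p = fun _ => 1) :
    (∀ φ : Module.Dual K (Fin 3 → K), IsFramePolar e p φ →
      ∃ t : K, t ≠ 0 ∧ ∀ x, φ x = t * (x 0 + x 1 + x 2)) ∧
    (∀ i j k : Fin 3, ({i, j, k} : Set (Fin 3)) = Set.univ →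
      ∀ u' : Fin 3 → K, IsFourthHarmonic K (e j) (e k) (e j + e k) u' →
        u' 0 + u' 1 + u' 2 = 0) :=
  stmt5_general K e he p hpp
end

section
/- Over a field of characteristic 2, the three points uᵢ = (pᵢp) ∩ (pⱼpₖ), for (i,j,k) ranging over cyclic permutations of (1,2,3), are collinear (where p₁,p₂,p₃ is a triangle and p a generic point). -/
/-- over a field of characteristic 2, given a triangle
`(P (v 0), P (v 1), P (v 2))` in `P(K³)` and a generic point `P p` (on no side),
the three intersection points `uᵢ = (pᵢ p) ∩ (pⱼ pₖ)` are collinear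
(their representatives are linearly dependent). -/
theorem stmt6 (K : Type*) [Field K] (h2 : (2 : K) = 0)
    (v : Fin 3 → Fin 3 → K) (hv : LinearIndependent K v)
    (p : Fin 3 → K) (hp : ∀ i j : Fin 3, i ≠ j → p ∉ Submodule.span K {v i, v j})
    (u : Fin 3 → Fin 3 → K)
    (h : ∀ i j k : Fin 3, ({i, j, k} : Set (Fin 3)) = Set.univ →
      u i ≠ 0 ∧ u i ∈ Submodule.span K {v i, p} ∧ u i ∈ Submodule.span K {v j, v k}) :
    ¬ LinearIndependent K u := by
  have hcard : Fintype.card (Fin 3) = Module.finrank K (Fin 3 → K) := by simp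
  let b := basisOfLinearIndependentOfCardEqFinrank hv hcard
  have hb : ⇑b = v := coe_basisOfLinearIndependentOfCardEqFinrank hv hcard
  set a : Fin 3 → K := fun i => b.repr p i with ha
  have hrepr : ∀ j, b.repr (v j) = Finsupp.single j 1 := by
    intro j; rw [← hb]; exact b.repr_self j
  have hset : ∀ i : Fin 3, ({i, i+1, i+2} : Set (Fin 3)) = Set.univ := by
    intro i; ext x
    simp only [Set.mem_insert_iff, Set.mem_singleton_iff, Set.mem_univ, iff_true]
    revert x i; decide
  have key : ∀ i : Fin 3, ∃ d : K, d ≠ 0 ∧ u i = d • p - (d * a i) • v i := by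
    intro i
    obtain ⟨hu0, hu1, hu2⟩ := h i (i+1) (i+2) (hset i)
    rw [Submodule.mem_span_pair] at hu1 hu2
    obtain ⟨c, d, hcd⟩ := hu1
    obtain ⟨e, f, hef⟩ := hu2
    have hne1 : i + 1 ≠ i := by fin_cases i <;> decide
    have hne2 : i + 2 ≠ i := by fin_cases i <;> decide
    have hci : b.repr (u i) i = c + d * a i := by
      rw [← hcd]; simp [hrepr, ha]
    have hci' : b.repr (u i) i = 0 := by
      rw [← hef]; simp [hrepr, Finsupp.single_apply, hne1, hne2]
    have hsum : c + d * a i = 0 := by rw [← hci, hci']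
    have hd : d ≠ 0 := by
      rintro rfl
      have hc0 : c = 0 := by simpa using hsum
      apply hu0
      rw [← hcd, hc0]; simp
    refine ⟨d, hd, ?_⟩
    have hc : c = -(d * a i) := eq_neg_of_add_eq_zero_left hsum
    rw [← hcd, hc]; module
  choose d hd hu using key
  have hpsum : a 0 • v 0 + a 1 • v 1 + a 2 • v 2 = p := by
    have := b.sum_repr p
    rwa [Fin.sum_univ_three, hb] at this
  have h2smul : ∀ x : Fin 3 → K, x + x = 0 := by
    intro x
    calc x + x = (2 : K) • x := by module
    _ = 0 := by rw [h2]; simp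
  have hzero : ∑ i : Fin 3, (d i)⁻¹ • u i = 0 := by
    have huu : ∀ i, (d i)⁻¹ • u i = p - a i • v i := by
      intro i
      rw [hu i, smul_sub, smul_smul, smul_smul, ← mul_assoc, inv_mul_cancel₀ (hd i)]
      simp
    rw [Fin.sum_univ_three, huu, huu, huu]
    calc (p - a 0 • v 0) + (p - a 1 • v 1) + (p - a 2 • v 2)
        = (p + p) + (p - (a 0 • v 0 + a 1 • v 1 + a 2 • v 2)) := by abel
      _ = 0 := by rw [hpsum, h2smul, sub_self, add_zero]
  intro hind
  rw [Fintype.linearIndependent_iff] at hind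
  have := hind (fun i => (d i)⁻¹) hzero 0
  exact inv_ne_zero (hd 0) this
end

section
/- Let K ⊂ ℝⁿ be an open bounded convex set. There exists a unique point x ∈ K minimizing the volume of the dual body K^x = {f ∈ (ℝⁿ)* : f(y−x) > −1 ∀ y ∈ closure(K)} (the Santaló point of K). -/
/-!
For `x ∈ closure K` let `h_x g = sup_{y ∈ closure K} g ⬝ᵥ y - g ⬝ᵥ x`, so that `K^x = -{h_x < 1}`.
Since `h_x` is nonnegative and positively homogeneous, the layer-cake formula gives
`∫ exp (-h_x) = n! · vol K^x`. As `h_x` is affine in `x` and `exp` is strictly convex, `x ↦ vol K^x`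
is strictly midpoint convex (strictly, because the hyperplane `g ⬝ᵥ x = g ⬝ᵥ x'` is null). It is
lower semicontinuous by Fatou's lemma, finite on `K`, and infinite off `K`, where a separating
functional is a recession direction of `{h_x < 1}`. Hence it attains its minimum on the compact set
`closure K`, at a point of `K`, and only once.
-/

open MeasureTheory Set Filter Topology Real
open scoped ENNReal Nat Pointwise

theorem lowerSemicontinuous_lintegral {X α : Type*} [TopologicalSpace X]
    [FirstCountableTopology X] [MeasurableSpace α] (μ : Measure α) {f : X → α → ℝ≥0∞}
    (hmeas : ∀ x, Measurable (f x)) (hf : ∀ a, LowerSemicontinuous (f · a)) :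
    LowerSemicontinuous fun x => ∫⁻ a, f x a ∂μ :=
  lowerSemicontinuous_iff_le_liminf.2 fun x =>
    (lintegral_mono fun a => (hf a).le_liminf x).trans (lintegral_liminf_le hmeas)

theorem lowerSemicontinuous_measure_preimage_prodMk {X α : Type*} [TopologicalSpace X]
    [FirstCountableTopology X] [TopologicalSpace α] [MeasurableSpace α] [OpensMeasurableSpace α]
    (μ : Measure α) {S : Set (X × α)} (hS : IsOpen S) :
    LowerSemicontinuous fun x => μ (Prod.mk x ⁻¹' S) := by
  have hsec : ∀ x, μ (Prod.mk x ⁻¹' S) = ∫⁻ a, S.indicator 1 (x, a) ∂μ := fun x =>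
    (lintegral_indicator_one (hS.preimage (Continuous.prodMk_right x)).measurableSet).symm
  simp only [hsec]
  exact lowerSemicontinuous_lintegral μ
    (fun x => measurable_one.indicator (hS.preimage (Continuous.prodMk_right x)).measurableSet)
    (fun a => (hS.preimage (Continuous.prodMk_left a)).lowerSemicontinuous_indicator zero_le_one)

theorem measure_eq_top_of_add_smul_mem {E : Type*} [NormedAddCommGroup E] [NormedSpace ℝ E]
    [MeasurableSpace E] [BorelSpace E] (μ : Measure E) [μ.IsAddHaarMeasure] {s : Set E} {v : E}
    (hv : v ≠ 0)
    (hs : ∀ g ∈ s, ∀ t : ℝ, 0 ≤ t → g + t • v ∈ s) (hint : (interior s).Nonempty) :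
    μ s = ⊤ := by
  obtain ⟨x, hx⟩ := hint
  obtain ⟨r, hr, hball⟩ := Metric.isOpen_iff.1 isOpen_interior x hx
  -- the translates of a small ball along the ray `ℝ≥0 • v` are disjoint and lie in `s`
  set ρ := min r (‖v‖ / 2)
  have hρ : 0 < ρ := lt_min hr (by positivity)
  let B : ℕ → Set E := fun k => Metric.ball (x + (k : ℝ) • v) ρ
  have hBs : ∀ k, B k ⊆ s := by
    intro k g hg
    have hmem : g - (k : ℝ) • v ∈ s := by
      refine interior_subset (hball ?_)
      rw [Metric.mem_ball, dist_eq_norm] at hg ⊢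
      calc ‖g - (k : ℝ) • v - x‖ = ‖g - (x + (k : ℝ) • v)‖ := by congr 1; abel
        _ < ρ := hg
        _ ≤ r := min_le_left _ _
    simpa using hs _ hmem k k.cast_nonneg
  have hdisj : Pairwise (Function.onFun Disjoint B) := by
    intro k l hkl
    refine Metric.ball_disjoint_ball ?_
    rw [dist_eq_norm, add_sub_add_left_eq_sub, ← sub_smul, norm_smul, Real.norm_eq_abs]
    have : (1 : ℝ) ≤ |(k : ℝ) - l| := by
      have h : (1 : ℤ) ≤ |(k : ℤ) - l| := Int.one_le_abs (sub_ne_zero.2 (by exact_mod_cast hkl))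
      exact_mod_cast h
    have : ρ ≤ ‖v‖ / 2 := min_le_right _ _
    nlinarith [norm_nonneg v]
  have hB : ∀ k, μ (B k) = μ (Metric.ball 0 ρ) := fun k => Measure.addHaar_ball_center μ _ _
  refine top_le_iff.1 ?_
  calc ⊤ = ∑' _k : ℕ, μ (Metric.ball 0 ρ) :=
        (ENNReal.tsum_const_eq_top_of_ne_zero (Metric.measure_ball_pos μ 0 hρ).ne').symm
    _ = μ (⋃ k, B k) := by
        rw [measure_iUnion hdisj fun k => measurableSet_ball]; exact tsum_congr fun k => (hB k).symm
    _ ≤ μ s := measure_mono (iUnion_subset hBs)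

theorem lintegral_Ioi_pow_mul_exp_neg (d : ℕ) :
    ∫⁻ s in Ioi (0 : ℝ), ENNReal.ofReal (s ^ d * exp (-s)) = d ! := by
  have hd : (0 : ℝ) < d + 1 := by positivity
  calc ∫⁻ s in Ioi (0 : ℝ), ENNReal.ofReal (s ^ d * exp (-s))
      = ∫⁻ s in Ioi (0 : ℝ), ENNReal.ofReal (exp (-s) * s ^ ((d + 1 : ℝ) - 1)) :=
        setLIntegral_congr_fun measurableSet_Ioi fun s _ => by simp [mul_comm]
    _ = ENNReal.ofReal (Gamma (d + 1)) := by
        rw [Gamma_eq_integral hd, ofReal_integral_eq_lintegral_ofReal (GammaIntegral_convergent hd)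
          ((ae_restrict_iff' measurableSet_Ioi).2 (ae_of_all _ fun s (hs : 0 < s) => by
            positivity))]
    _ = d ! := by rw [Gamma_nat_eq_factorial, ENNReal.ofReal_natCast]

theorem ofReal_exp_neg_eq_lintegral {t : ℝ} (ht : 0 ≤ t) :
    ENNReal.ofReal (exp (-t))
      = ∫⁻ s in Ioi (0 : ℝ), (Ioi t).indicator (fun s => ENNReal.ofReal (exp (-s))) s := by
  rw [lintegral_indicator measurableSet_Ioi, Measure.restrict_restrict measurableSet_Ioi,
    inter_eq_self_of_subset_left (Ioi_subset_Ioi ht), ← integral_exp_neg_Ioi,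
    ofReal_integral_eq_lintegral_ofReal (integrableOn_exp_neg_Ioi t)
      (ae_of_all _ fun s => (exp_pos _).le)]

theorem lintegral_exp_neg_eq_factorial_mul_measure {E : Type*} [NormedAddCommGroup E]
    [NormedSpace ℝ E] [FiniteDimensional ℝ E] [MeasurableSpace E] [BorelSpace E]
    (μ : Measure E) [μ.IsAddHaarMeasure] {h : E → ℝ} (hmeas : Measurable h) (h0 : ∀ g, 0 ≤ h g)
    (hsmul : ∀ c : ℝ, 0 < c → ∀ g, h (c • g) = c * h g) :
    ∫⁻ g, ENNReal.ofReal (exp (-h g)) ∂μ = (Module.finrank ℝ E) ! * μ {g | h g < 1} := by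
  have hsublevel : ∀ s : ℝ, 0 < s →
      μ {g | h g < s} = ENNReal.ofReal (s ^ Module.finrank ℝ E) * μ {g | h g < 1} := by
    intro s hs
    have : {g | h g < s} = s • {g | h g < 1} := by
      ext g
      rw [mem_smul_set_iff_inv_smul_mem₀ hs.ne', mem_ofPred_eq, mem_ofPred_eq,
        hsmul _ (inv_pos.2 hs), inv_mul_lt_iff₀ hs, mul_one]
    rw [this, Measure.addHaar_smul_of_nonneg μ hs.le]
  let H : E → ℝ → ℝ≥0∞ := fun g s =>
    {g | h g < s}.indicator (fun _ => ENNReal.ofReal (exp (-s))) g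
  have hH : Measurable (Function.uncurry H) :=
    show Measurable ({p : E × ℝ | h p.1 < p.2}.indicator fun p => ENNReal.ofReal (exp (-p.2))) from
      Measurable.indicator (by fun_prop)
        (measurableSet_lt (hmeas.comp measurable_fst) measurable_snd)
  calc ∫⁻ g, ENNReal.ofReal (exp (-h g)) ∂μ = ∫⁻ g, (∫⁻ s in Ioi (0 : ℝ), H g s) ∂μ := by
        refine lintegral_congr fun g => ?_
        rw [ofReal_exp_neg_eq_lintegral (h0 g)]
        rfl
    _ = ∫⁻ s in Ioi (0 : ℝ), ∫⁻ g, H g s ∂μ := lintegral_lintegral_swap hH.aemeasurable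
    _ = ∫⁻ s in Ioi (0 : ℝ),
          ENNReal.ofReal (s ^ Module.finrank ℝ E * exp (-s)) * μ {g | h g < 1} := by
        refine setLIntegral_congr_fun measurableSet_Ioi fun s hs => ?_
        rw [lintegral_indicator_const (measurableSet_lt hmeas measurable_const), hsublevel s hs,
          ← mul_assoc, ← ENNReal.ofReal_mul (exp_pos _).le, mul_comm (exp (-s))]
    _ = _ := by rw [lintegral_mul_const _ (by fun_prop), lintegral_Ioi_pow_mul_exp_neg]

theorem two_mul_exp_midpoint_lt {a b : ℝ} (hab : a ≠ b) :
    2 * exp ((a + b) / 2) < exp a + exp b := by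
  have h := strictConvexOn_exp.2 (mem_univ a) (mem_univ b) hab (one_half_pos (α := ℝ)) one_half_pos
    (add_halves 1)
  simp only [smul_eq_mul] at h
  calc 2 * exp ((a + b) / 2) = 2 * exp (1 / 2 * a + 1 / 2 * b) := by ring_nf
    _ < 2 * (1 / 2 * exp a + 1 / 2 * exp b) := by gcongr
    _ = exp a + exp b := by ring

theorem two_mul_exp_midpoint_le (a b : ℝ) : 2 * exp ((a + b) / 2) ≤ exp a + exp b := by
  rcases eq_or_ne a b with rfl | hab
  · rw [add_self_div_two, two_mul]
  · exact (two_mul_exp_midpoint_lt hab).le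

theorem two_mul_lintegral_exp_midpoint_lt {α : Type*} [MeasurableSpace α] (μ : Measure α)
    {u v : α → ℝ} (hu : Measurable u) (hv : Measurable v)
    (hu_fin : ∫⁻ a, ENNReal.ofReal (exp (u a)) ∂μ ≠ ⊤)
    (hv_fin : ∫⁻ a, ENNReal.ofReal (exp (v a)) ∂μ ≠ ⊤) (hne : ∃ᵐ a ∂μ, u a ≠ v a) :
    2 * ∫⁻ a, ENNReal.ofReal (exp ((u a + v a) / 2)) ∂μ
      < ∫⁻ a, ENNReal.ofReal (exp (u a)) ∂μ + ∫⁻ a, ENNReal.ofReal (exp (v a)) ∂μ := by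
  have hsum : ∀ a, ENNReal.ofReal (exp (u a)) + ENNReal.ofReal (exp (v a))
      = ENNReal.ofReal (exp (u a) + exp (v a)) := fun a =>
    (ENNReal.ofReal_add (exp_pos _).le (exp_pos _).le).symm
  have hle : ∀ a, ENNReal.ofReal (2 * exp ((u a + v a) / 2))
      ≤ ENNReal.ofReal (exp (u a) + exp (v a)) := fun a =>
    ENNReal.ofReal_le_ofReal (two_mul_exp_midpoint_le _ _)
  have hint : ∫⁻ a, ENNReal.ofReal (exp (u a) + exp (v a)) ∂μ
      = ∫⁻ a, ENNReal.ofReal (exp (u a)) ∂μ + ∫⁻ a, ENNReal.ofReal (exp (v a)) ∂μ := by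
    simp_rw [← hsum]
    exact lintegral_add_left (by fun_prop) _
  calc 2 * ∫⁻ a, ENNReal.ofReal (exp ((u a + v a) / 2)) ∂μ
      = ∫⁻ a, ENNReal.ofReal (2 * exp ((u a + v a) / 2)) ∂μ := by
        rw [← lintegral_const_mul _ (by fun_prop)]
        simp only [ENNReal.ofReal_mul zero_le_two, ENNReal.ofReal_ofNat]
    _ < ∫⁻ a, ENNReal.ofReal (exp (u a) + exp (v a)) ∂μ := by
        refine lintegral_strict_mono_of_ae_le_of_frequently_ae_lt (by fun_prop)
          (ne_top_of_le_ne_top ?_ (lintegral_mono hle)) (ae_of_all _ hle) (hne.mono fun a ha => ?_)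
        · rw [hint]
          exact ENNReal.add_ne_top.2 ⟨hu_fin, hv_fin⟩
        · exact ((ENNReal.ofReal_lt_ofReal_iff (by positivity)).2 (two_mul_exp_midpoint_lt ha)).ne
    _ = _ := hint

namespace Santalo

variable {n : ℕ} {C : Set (Fin n → ℝ)}

noncomputable def supportFun (C : Set (Fin n → ℝ)) (g : Fin n → ℝ) : ℝ := sSup ((g ⬝ᵥ ·) '' C)

theorem le_supportFun (hC : IsCompact C) {y : Fin n → ℝ} (hy : y ∈ C) (g : Fin n → ℝ) :
    g ⬝ᵥ y ≤ supportFun C g :=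
  le_csSup ((hC.image (by fun_prop)).bddAbove) (mem_image_of_mem _ hy)

theorem supportFun_le (hne : C.Nonempty) {g : Fin n → ℝ} {a : ℝ} (h : ∀ y ∈ C, g ⬝ᵥ y ≤ a) :
    supportFun C g ≤ a :=
  csSup_le (hne.image _) (forall_mem_image.2 h)

theorem supportFun_lt_iff (hC : IsCompact C) (hne : C.Nonempty) {g : Fin n → ℝ} {a : ℝ} :
    supportFun C g < a ↔ ∀ y ∈ C, g ⬝ᵥ y < a := by
  refine ⟨fun h y hy => (le_supportFun hC hy g).trans_lt h, fun h => ?_⟩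
  obtain ⟨y, hy, hmax⟩ := (hC.image (f := (g ⬝ᵥ ·)) (by fun_prop)).sSup_mem (hne.image _)
  rw [supportFun, ← hmax]
  exact h y hy

theorem continuous_supportFun (hC : IsCompact C) : Continuous (supportFun C) :=
  hC.continuous_sSup (by fun_prop)

theorem supportFun_smul {c : ℝ} (hc : 0 ≤ c) (g : Fin n → ℝ) :
    supportFun C (c • g) = c * supportFun C g := by
  simp only [supportFun, smul_dotProduct, ← smul_eq_mul, ← Real.sSup_smul_of_nonneg hc,
    ← image_smul, image_image]

theorem supportFun_zero (hne : C.Nonempty) : supportFun C 0 = 0 := by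
  simp [supportFun, hne.image_const]

theorem supportFun_sub_dotProduct_nonneg (hC : IsCompact C) {x : Fin n → ℝ} (hx : x ∈ C)
    (g : Fin n → ℝ) : 0 ≤ supportFun C g - g ⬝ᵥ x :=
  sub_nonneg.2 (le_supportFun hC hx g)

theorem mul_abs_le_supportFun_sub_dotProduct (hC : IsCompact C) {x : Fin n → ℝ} {ε : ℝ}
    (hε : 0 ≤ ε) (hball : Metric.closedBall x ε ⊆ C) (g : Fin n → ℝ) (i : Fin n) :
    ε * |g i| ≤ supportFun C g - g ⬝ᵥ x := by
  have key : ∀ c : ℝ, |c| ≤ ε → c * g i ≤ supportFun C g - g ⬝ᵥ x := fun c hc => by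
    have hy : x + Pi.single i c ∈ C := hball (by simpa [dist_eq_norm, Pi.norm_single] using hc)
    have := le_supportFun hC hy g
    rw [dotProduct_add, dotProduct_single] at this
    linarith
  rcases abs_cases (g i) with ⟨h, -⟩ | ⟨h, -⟩
  · simpa [h] using key ε (abs_of_nonneg hε).le
  · simpa [h] using key (-ε) (by rw [abs_neg, abs_of_nonneg hε])

noncomputable def dualVolume (C : Set (Fin n → ℝ)) (x : Fin n → ℝ) : ℝ≥0∞ :=
  volume {g | supportFun C g - g ⬝ᵥ x < 1}

theorem volume_dual_eq (hC : IsCompact C) (hne : C.Nonempty) (x : Fin n → ℝ) :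
    volume {f : Fin n → ℝ | ∀ y ∈ C, -1 < f ⬝ᵥ (y - x)} = dualVolume C x := by
  have : {f : Fin n → ℝ | ∀ y ∈ C, -1 < f ⬝ᵥ (y - x)} = -{g | supportFun C g - g ⬝ᵥ x < 1} := by
    ext f
    simp only [mem_ofPred_eq, Set.mem_neg, sub_lt_iff_lt_add, supportFun_lt_iff hC hne,
      dotProduct_sub]
    refine forall₂_congr fun y _ => ?_
    rw [neg_dotProduct, neg_dotProduct]
    constructor <;> intro h <;> linarith
  rw [this, Measure.measure_neg, dualVolume]

theorem dualVolume_lt_top (hC : IsCompact C) {x : Fin n → ℝ} (hx : x ∈ interior C) :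
    dualVolume C x < ⊤ := by
  obtain ⟨ε, hε, hball⟩ := Metric.nhds_basis_closedBall.mem_iff.1 (mem_interior_iff_mem_nhds.1 hx)
  have hsub : {g | supportFun C g - g ⬝ᵥ x < 1} ⊆ Metric.closedBall 0 ε⁻¹ := fun g hg => by
    rw [mem_closedBall_zero_iff, pi_norm_le_iff_of_nonneg (by positivity)]
    intro i
    rw [Real.norm_eq_abs, ← one_div, le_div_iff₀ hε, mul_comm]
    exact (mul_abs_le_supportFun_sub_dotProduct hC hε.le hball g i).trans hg.le
  exact (measure_mono hsub).trans_lt measure_closedBall_lt_top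

theorem dualVolume_eq_top {K : Set (Fin n → ℝ)} (hKopen : IsOpen K)
    (hKbdd : Bornology.IsBounded K) (hKconv : Convex ℝ K) (hKne : K.Nonempty)
    {x : Fin n → ℝ} (hx : x ∉ K) :
    dualVolume (closure K) x = ⊤ := by
  have hC := hKbdd.isCompact_closure
  obtain ⟨ℓ, hℓ⟩ := geometric_hahn_banach_open_point hKconv hKopen hx
  set u : Fin n → ℝ := fun i => ℓ (Pi.single i 1)
  have hℓu : ∀ g, ℓ g = g ⬝ᵥ u := fun g => by
    conv_lhs => rw [pi_eq_sum_univ' g]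
    simp [map_sum, dotProduct, u]
  have hu : u ≠ 0 := by
    rintro hu
    obtain ⟨a, ha⟩ := hKne
    simpa [hℓu, hu] using hℓ a ha
  have hsep : ∀ y ∈ closure K, u ⬝ᵥ y ≤ u ⬝ᵥ x := fun y hy => by
    simp only [dotProduct_comm u, ← hℓu]
    exact closure_minimal (fun a ha => (hℓ a ha).le) (isClosed_le ℓ.continuous continuous_const) hy
  set S := {g | supportFun (closure K) g - g ⬝ᵥ x < 1}
  have hS0 : (0 : Fin n → ℝ) ∈ interior S := by
    have := continuous_supportFun hC
    rw [(isOpen_lt (by fun_prop) continuous_const : IsOpen S).interior_eq]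
    simp [supportFun_zero hKne.closure]
  refine measure_eq_top_of_add_smul_mem volume hu (fun g hg t ht => ?_) ⟨0, hS0⟩
  simp only [mem_ofPred_eq] at hg ⊢
  refine lt_of_le_of_lt ?_ hg
  have : supportFun (closure K) (g + t • u) ≤ supportFun (closure K) g + t * (u ⬝ᵥ x) :=
    supportFun_le hKne.closure fun y hy => by
      rw [add_dotProduct, smul_dotProduct, smul_eq_mul]
      exact add_le_add (le_supportFun hC hy g) (mul_le_mul_of_nonneg_left (hsep y hy) ht)
  rw [add_dotProduct, smul_dotProduct, smul_eq_mul]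
  linarith

theorem lowerSemicontinuous_dualVolume (hC : IsCompact C) : LowerSemicontinuous (dualVolume C) :=
  have := continuous_supportFun hC
  lowerSemicontinuous_measure_preimage_prodMk volume
    (isOpen_lt (f := fun p : (Fin n → ℝ) × (Fin n → ℝ) => supportFun C p.2 - p.2 ⬝ᵥ p.1)
      (by fun_prop) continuous_const)

theorem factorial_mul_dualVolume (hC : IsCompact C) {x : Fin n → ℝ} (hx : x ∈ C) :
    (n ! : ℝ≥0∞) * dualVolume C x
      = ∫⁻ g, ENNReal.ofReal (exp (-(supportFun C g - g ⬝ᵥ x))) := by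
  have := continuous_supportFun hC
  rw [lintegral_exp_neg_eq_factorial_mul_measure volume (by fun_prop)
    (supportFun_sub_dotProduct_nonneg hC hx) fun c hc g => by
      rw [supportFun_smul hc.le, smul_dotProduct, smul_eq_mul, mul_sub], Module.finrank_fin_fun]
  rfl

theorem two_mul_dualVolume_midpoint_lt (hC : IsCompact C) (hCconv : Convex ℝ C)
    {x x' : Fin n → ℝ} (hx : x ∈ C) (hx' : x' ∈ C) (hne : x ≠ x')
    (hfin : dualVolume C x ≠ ⊤) (hfin' : dualVolume C x' ≠ ⊤) :
    2 * dualVolume C ((1 / 2 : ℝ) • x + (1 / 2 : ℝ) • x') < dualVolume C x + dualVolume C x' := by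
  have := continuous_supportFun hC
  have hmid : (1 / 2 : ℝ) • x + (1 / 2 : ℝ) • x' ∈ C :=
    hCconv hx hx' (by norm_num) (by norm_num) (add_halves 1)
  have hsplit : ∀ g : Fin n → ℝ, -(supportFun C g - g ⬝ᵥ ((1 / 2 : ℝ) • x + (1 / 2 : ℝ) • x'))
      = (-(supportFun C g - g ⬝ᵥ x) + -(supportFun C g - g ⬝ᵥ x')) / 2 := fun g => by
    rw [dotProduct_add, dotProduct_smul, dotProduct_smul, smul_eq_mul, smul_eq_mul]
    ring
  have hsep : ∃ᵐ g : Fin n → ℝ, -(supportFun C g - g ⬝ᵥ x) ≠ -(supportFun C g - g ⬝ᵥ x') := by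
    have hopen : IsOpen {g : Fin n → ℝ | g ⬝ᵥ x ≠ g ⬝ᵥ x'} :=
      isOpen_ne_fun (by fun_prop) (by fun_prop)
    have hmem : x - x' ∈ {g : Fin n → ℝ | g ⬝ᵥ x ≠ g ⬝ᵥ x'} := by
      have := dotProduct_self_eq_zero.not.2 (sub_ne_zero.2 hne)
      rwa [dotProduct_sub, sub_eq_zero] at this
    refine (frequently_ae_iff.2 (hopen.measure_pos volume ⟨_, hmem⟩).ne').mono fun g hg => ?_
    simpa using hg
  have hlt := two_mul_lintegral_exp_midpoint_lt volume (by fun_prop) (by fun_prop)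
    (factorial_mul_dualVolume hC hx ▸ ENNReal.mul_ne_top (ENNReal.natCast_ne_top _) hfin)
    (factorial_mul_dualVolume hC hx' ▸ ENNReal.mul_ne_top (ENNReal.natCast_ne_top _) hfin') hsep
  simp only [← hsplit, ← factorial_mul_dualVolume hC hx, ← factorial_mul_dualVolume hC hx',
    ← factorial_mul_dualVolume hC hmid, ← mul_add, mul_left_comm (2 : ℝ≥0∞)] at hlt
  exact (ENNReal.mul_lt_mul_iff_right (Nat.cast_ne_zero.2 n.factorial_ne_zero)
    (ENNReal.natCast_ne_top _)).1 hlt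

theorem exists_isMinOn_dualVolume {K : Set (Fin n → ℝ)} (hKopen : IsOpen K)
    (hKbdd : Bornology.IsBounded K) (hKconv : Convex ℝ K) (hKne : K.Nonempty) :
    ∃ x ∈ K, IsMinOn (dualVolume (closure K)) K x := by
  have hC := hKbdd.isCompact_closure
  obtain ⟨x, hxC, hmin⟩ :=
    (lowerSemicontinuous_dualVolume hC).lowerSemicontinuousOn _ |>.exists_isMinOn hKne.closure hC
  obtain ⟨x₀, hx₀⟩ := hKne
  have hxK : x ∈ K := by
    by_contra hx
    have := hmin (subset_closure hx₀)
    rw [mem_ofPred_eq, dualVolume_eq_top hKopen hKbdd hKconv ⟨x₀, hx₀⟩ hx, top_le_iff] at this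
    exact (dualVolume_lt_top hC (interior_maximal subset_closure hKopen hx₀)).ne this
  exact ⟨x, hxK, hmin.on_subset subset_closure⟩

end Santalo

/-- let `K ⊂ ℝⁿ` be a nonempty open bounded convex set.  There exists
a unique point `x ∈ K` minimizing the volume of the dual body
`K^x = {f : ⟨f, y - x⟩ > -1 ∀ y ∈ closure K}` (the Santaló point of `K`). -/
theorem stmt17 (n : ℕ) (K : Set (Fin n → ℝ))
    (hKopen : IsOpen K) (hKbdd : Bornology.IsBounded K) (hKconv : Convex ℝ K)
    (hKne : K.Nonempty)
    (dual : (Fin n → ℝ) → Set (Fin n → ℝ))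
    (hdual : ∀ x, dual x = {f | ∀ y ∈ closure K, -1 < ∑ i, f i * (y i - x i)}) :
    ∃! x : Fin n → ℝ, x ∈ K ∧ ∀ y ∈ K, volume (dual x) ≤ volume (dual y) := by
  open Santalo in
  have hC := hKbdd.isCompact_closure
  have hvol : ∀ x, volume (dual x) = dualVolume (closure K) x := fun x => by
    rw [hdual]
    exact volume_dual_eq hC hKne.closure x
  have hfin : ∀ x ∈ K, dualVolume (closure K) x ≠ ⊤ := fun x hx =>
    (dualVolume_lt_top hC (interior_maximal subset_closure hKopen hx)).ne
  simp only [hvol]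
  obtain ⟨x, hxK, hmin⟩ := exists_isMinOn_dualVolume hKopen hKbdd hKconv hKne
  refine ⟨x, ⟨hxK, fun y hy => hmin hy⟩, fun x' ⟨hx'K, hx'min⟩ => by_contra fun hne => ?_⟩
  have hlt := two_mul_dualVolume_midpoint_lt hC hKconv.closure (subset_closure hx'K)
    (subset_closure hxK) hne (hfin x' hx'K) (hfin x hxK)
  have hmid := hmin (hKconv hx'K hxK (by norm_num) (by norm_num) (add_halves (1 : ℝ)))
  refine hlt.not_ge ?_
  calc dualVolume (closure K) x' + dualVolume (closure K) x
      ≤ 2 * dualVolume (closure K) x := by rw [two_mul]; gcongr; exact hx'min x hxK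
    _ ≤ _ := by gcongr; exact hmid
end
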